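/- For every short exact sequence X ↣ Y ↠ Z in an exact category (𝒜, ℰ) with X, Y, Z of finite ℰ-length, the ℰ-length is superadditive: l_ℰ(Y) ≥ l_ℰ(X) + l_ℰ(Z). -/

import Mathlib

open CategoryTheory CategoryTheory.Limits

universe v u

variable {C : Type u} [Category.{v} C] [Preadditive C]

/-- A kernel-cokernel pair: `S.f` is a kernel of `S.g` and `S.g` is a cokernel of `S.f`. -/
structure IsKernelCokernelPair (S : ShortComplex C) : Prop where
  isKernel : Nonempty (IsLimit (KernelFork.ofι S.f S.zero))
  isCokernel : Nonempty (IsColimit (CokernelCofork.ofπ S.g S.zero))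

/-- `i` is an admissible monic for the class `E`. -/
def AdmissibleMono (E : Set (ShortComplex C)) {A B : C} (i : A ⟶ B) : Prop :=
  ∃ (Z : C) (d : B ⟶ Z) (w : i ≫ d = 0), ShortComplex.mk i d w ∈ E

/-- `d` is an admissible epic for the class `E`. -/
def AdmissibleEpi (E : Set (ShortComplex C)) {B Z : C} (d : B ⟶ Z) : Prop :=
  ∃ (A : C) (i : A ⟶ B) (w : i ≫ d = 0), ShortComplex.mk i d w ∈ E

/-- Quillen's axioms for an exact structure on an additive category. -/
structure IsExactStructure (E : Set (ShortComplex C)) : Prop where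
  kcp : ∀ S ∈ E, IsKernelCokernelPair S
  iso_closed : ∀ S T : ShortComplex C, S ∈ E → Nonempty (S ≅ T) → T ∈ E
  id_mono : ∀ A : C, AdmissibleMono E (𝟙 A)
  id_epi : ∀ A : C, AdmissibleEpi E (𝟙 A)
  mono_comp : ∀ {A B D : C} (i : A ⟶ B) (j : B ⟶ D),
    AdmissibleMono E i → AdmissibleMono E j → AdmissibleMono E (i ≫ j)
  epi_comp : ∀ {A B D : C} (p : A ⟶ B) (q : B ⟶ D),
    AdmissibleEpi E p → AdmissibleEpi E q → AdmissibleEpi E (p ≫ q)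
  pushout : ∀ {A B X : C} (i : A ⟶ B) (t : A ⟶ X), AdmissibleMono E i →
    ∃ (P : C) (sB : B ⟶ P) (sX : X ⟶ P), IsPushout i t sB sX ∧ AdmissibleMono E sX
  pullback : ∀ {B X Y : C} (d : B ⟶ X) (t : Y ⟶ X), AdmissibleEpi E d →
    ∃ (P : C) (pB : P ⟶ B) (pY : P ⟶ Y), IsPullback pB pY d t ∧ AdmissibleEpi E pY

/-- The class of split short exact sequences: those isomorphic to
`A → A ⊞ B → B` with the canonical inclusion and projection. -/
def splitClass (C : Type u) [Category.{v} C] [Preadditive C] [HasBinaryBiproducts C] :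
    Set (ShortComplex C) :=
  { S | ∃ (A B : C), Nonempty (S ≅ ShortComplex.mk (biprod.inl : A ⟶ A ⊞ B)
      (biprod.snd : A ⊞ B ⟶ B) (by simp)) }

/-- `X` is an `ℰ`-subobject of `Y`: there is an admissible monic `X ↣ Y`. -/
def ESubobject (E : Set (ShortComplex C)) (X Y : C) : Prop :=
  ∃ i : X ⟶ Y, AdmissibleMono E i

/-- There is a chain `0 = X₀ ↣ X₁ ↣ ⋯ ↣ Xₙ = X` of admissible monics that are
not isomorphisms. -/
def HasChainOfLength (E : Set (ShortComplex C)) (X : C) (n : ℕ) : Prop :=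
  ∃ (obj : Fin (n + 1) → C) (f : ∀ i : Fin n, obj i.castSucc ⟶ obj i.succ),
    IsZero (obj 0) ∧ obj (Fin.last n) = X ∧
    ∀ i : Fin n, AdmissibleMono E (f i) ∧ ¬ IsIso (f i)

/-- The `ℰ`-length of `X`: the supremum of the lengths of chains of proper
admissible monics ending in `X`. -/
noncomputable def eLength (E : Set (ShortComplex C)) (X : C) : ℕ∞ :=
  sSup { n : ℕ∞ | ∃ m : ℕ, HasChainOfLength E X m ∧ n = (m : ℕ∞) }

/-!
Induct on the length `k` of a chain ending in `S.X₃`. Pulling the admissible epic `S.g` back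
along the last step `c : Z' ↣ S.X₃` of the chain yields an admissible monic `P ↣ S.X₂` with the
same cokernel as `c` (so it is an isomorphism only if `c` is) and a conflation
`S.X₁ ↣ P ↠ Z'`. By induction `P` carries a chain of length `m + (k - 1)`, and appending
`P ↣ S.X₂` gives a chain of length `m + k` ending in `S.X₂`; now take suprema.
-/

namespace IsKernelCokernelPair

variable {S : ShortComplex C} (hS : IsKernelCokernelPair S)
include hS

lemma mono_f : Mono S.f := by
  obtain ⟨h⟩ := hS.isKernel
  exact mono_of_isLimit_fork h

lemma isIso_f_iff_isZero_X₃ : IsIso S.f ↔ IsZero S.X₃ := by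
  obtain ⟨hk⟩ := hS.isKernel
  obtain ⟨hc⟩ := hS.isCokernel
  exact ⟨fun _ => CokernelCofork.IsColimit.isZero_of_epi hc,
    fun h => KernelFork.IsLimit.isIso_ι _ hk (h.eq_of_tgt _ _)⟩

end IsKernelCokernelPair

section Chains

variable {E : Set (ShortComplex C)}

lemma hasChainOfLength_zero_iff {X : C} : HasChainOfLength E X 0 ↔ IsZero X := by
  constructor
  · rintro ⟨obj, f, h0, rfl, -⟩
    exact h0
  · exact fun h => ⟨fun _ => X, fun i => i.elim0, h, rfl, fun i => i.elim0⟩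

lemma admissibleMono_and_not_isIso_eqToHom_conj {A A' B B' : C} (hA : A' = A) (hB : B = B')
    {i : A ⟶ B} (h : AdmissibleMono E i ∧ ¬ IsIso i) :
    AdmissibleMono E (eqToHom hA ≫ i ≫ eqToHom hB) ∧ ¬ IsIso (eqToHom hA ≫ i ≫ eqToHom hB) := by
  subst hA hB
  simpa using h

lemma hasChainOfLength_succ_iff {Y : C} {n : ℕ} :
    HasChainOfLength E Y (n + 1) ↔
      ∃ (X : C) (i : X ⟶ Y), HasChainOfLength E X n ∧ AdmissibleMono E i ∧ ¬ IsIso i := by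
  constructor
  · rintro ⟨obj, f, h0, rfl, hf⟩
    exact ⟨_, f (Fin.last n),
      ⟨fun j => obj j.castSucc, fun j => f j.castSucc, h0, rfl, fun j => hf j.castSucc⟩,
      hf (Fin.last n)⟩
  · rintro ⟨X, i, ⟨obj, f, h0, rfl, hf⟩, hi⟩
    let obj' : Fin (n + 2) → C := Fin.snoc obj Y
    refine ⟨obj', Fin.lastCases (motive := fun j => obj' j.castSucc ⟶ obj' j.succ)
        (eqToHom (by simp [obj']) ≫ i ≫ eqToHom (by simp [obj']))
        (fun j => eqToHom (by simp [obj']) ≫ f j ≫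
          eqToHom (by simp only [obj', Fin.succ_castSucc, Fin.snoc_castSucc])),
      by simpa [obj'] using h0, by simp [obj'], fun j => ?_⟩
    induction j using Fin.lastCases with
    | last => simpa using admissibleMono_and_not_isIso_eqToHom_conj _ _ hi
    | cast j => simpa using admissibleMono_and_not_isIso_eqToHom_conj _ _ (hf j)

end Chains

namespace IsExactStructure

variable {E : Set (ShortComplex C)} (hE : IsExactStructure E)
include hE

lemma isIso_f_iff_isZero_X₃ {S : ShortComplex C} (hS : S ∈ E) : IsIso S.f ↔ IsZero S.X₃ :=
  (hE.kcp S hS).isIso_f_iff_isZero_X₃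

lemma admissibleMono_comp_iso {A B B' : C} {i : A ⟶ B} (hi : AdmissibleMono E i) (e : B ≅ B') :
    AdmissibleMono E (i ≫ e.hom) := by
  obtain ⟨Z, d, w, hm⟩ := hi
  refine ⟨Z, e.inv ≫ d, by simpa using w, hE.iso_closed _ _ hm ⟨?_⟩⟩
  exact ShortComplex.isoMk (Iso.refl _) e (Iso.refl _) (by simp) (by simp)

lemma exists_isZero_admissibleMono (X : C) :
    ∃ (A : C) (i : A ⟶ X), IsZero A ∧ AdmissibleMono E i := by
  obtain ⟨A, i, w, hm⟩ := hE.id_epi X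
  have := (hE.kcp _ hm).mono_f
  exact ⟨A, i, IsZero.of_mono_eq_zero i (by simpa using w), X, 𝟙 X, w, hm⟩

lemma mem_of_isLimit_kernelFork {P B Z : C} {d : B ⟶ Z} (hd : AdmissibleEpi E d) {k : P ⟶ B}
    (hw : k ≫ d = 0) (hk : IsLimit (KernelFork.ofι k hw)) : ShortComplex.mk k d hw ∈ E := by
  obtain ⟨A, i, w, hm⟩ := hd
  obtain ⟨hi⟩ := (hE.kcp _ hm).isKernel
  refine hE.iso_closed _ _ hm ⟨ShortComplex.isoMk (IsLimit.conePointUniqueUpToIso hi hk)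
    (Iso.refl _) (Iso.refl _) ?_ (by simp)⟩
  simpa using IsLimit.conePointUniqueUpToIso_hom_comp hi hk WalkingParallelPair.zero

lemma mem_of_isPullback {P B Z Z' W : C} {d : B ⟶ Z} (hd : AdmissibleEpi E d)
    {j : Z' ⟶ Z} {q : Z ⟶ W} {wq : j ≫ q = 0} (hj : ShortComplex.mk j q wq ∈ E)
    {pB : P ⟶ B} {pZ : P ⟶ Z'} (sq : IsPullback pB pZ d j) :
    ShortComplex.mk pB (d ≫ q) (by rw [sq.w_assoc, wq, comp_zero]) ∈ E := by
  obtain ⟨hker⟩ := (hE.kcp _ hj).isKernel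
  -- `pB` is a pullback of the kernel `j` of `q`, hence a kernel of `d ≫ q`.
  let _ : NormalMono j := ⟨W, q, wq, hker⟩
  exact hE.mem_of_isLimit_kernelFork (hE.epi_comp d q hd ⟨_, _, _, hj⟩) _
    (normalOfIsPullbackFstOfNormal sq.w sq.isLimit).isLimit

lemma exists_mem_of_isPullback {S : ShortComplex C} (hS : S ∈ E) {P Z' : C} {pY : P ⟶ S.X₂}
    {pZ : P ⟶ Z'} {c : Z' ⟶ S.X₃} (sq : IsPullback pY pZ S.g c) (hpZ : AdmissibleEpi E pZ) :
    ∃ (k : S.X₁ ⟶ P) (w : k ≫ pZ = 0), ShortComplex.mk k pZ w ∈ E := by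
  obtain ⟨hker⟩ := (hE.kcp S hS).isKernel
  have := (hE.kcp S hS).mono_f
  have hk : S.f ≫ S.g = 0 ≫ c := by simp
  have := mono_of_mono_fac (sq.lift_fst S.f 0 hk)
  refine ⟨sq.lift S.f 0 hk, sq.lift_snd _ _ _, hE.mem_of_isLimit_kernelFork hpZ _ ?_⟩
  refine KernelFork.IsLimit.ofι' _ _ fun {V} u hu => ?_
  obtain ⟨v, hv⟩ := KernelFork.IsLimit.lift' hker (u ≫ pY)
    (by rw [Category.assoc, sq.w, reassoc_of% hu, zero_comp])
  exact ⟨v, sq.hom_ext (by simpa using hv) (by simpa using hu.symm)⟩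

lemma hasChainOfLength_of_iso {X Y : C} (e : X ≅ Y) {n : ℕ} (h : HasChainOfLength E X n) :
    HasChainOfLength E Y n := by
  cases n with
  | zero => exact hasChainOfLength_zero_iff.2 ((hasChainOfLength_zero_iff.1 h).of_iso e.symm)
  | succ n =>
    obtain ⟨X', i, h', hi, hni⟩ := hasChainOfLength_succ_iff.1 h
    exact hasChainOfLength_succ_iff.2
      ⟨X', i ≫ e.hom, h', hE.admissibleMono_comp_iso hi e, by simpa using hni⟩

lemma exists_hasChainOfLength (X : C) : ∃ n, HasChainOfLength E X n := by
  obtain ⟨A, i, hA, hi⟩ := hE.exists_isZero_admissibleMono X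
  by_cases hiso : IsIso i
  · exact ⟨0, hasChainOfLength_zero_iff.2 (hA.of_iso (asIso i).symm)⟩
  · exact ⟨1, hasChainOfLength_succ_iff.2 ⟨A, i, hasChainOfLength_zero_iff.2 hA, hi, hiso⟩⟩

lemma hasChainOfLength_add {S : ShortComplex C} (hS : S ∈ E) {m k : ℕ}
    (h₁ : HasChainOfLength E S.X₁ m) (h₃ : HasChainOfLength E S.X₃ k) :
    HasChainOfLength E S.X₂ (m + k) := by
  induction k generalizing S with
  | zero =>
    have := (hE.isIso_f_iff_isZero_X₃ hS).2 (hasChainOfLength_zero_iff.1 h₃)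
    exact hE.hasChainOfLength_of_iso (asIso S.f) h₁
  | succ k ih =>
    obtain ⟨Z', c, h₃', ⟨W, q, wq, hcq⟩, hnc⟩ := hasChainOfLength_succ_iff.1 h₃
    obtain ⟨P, pY, pZ, sq, hpZ⟩ := hE.pullback S.g c ⟨_, _, _, hS⟩
    obtain ⟨f', w', hf'⟩ := hE.exists_mem_of_isPullback hS sq hpZ
    have hpY := hE.mem_of_isPullback ⟨_, _, _, hS⟩ hcq sq
    refine hasChainOfLength_succ_iff.2 ⟨P, pY, ih (S := ShortComplex.mk f' pZ w') hf' h₁ h₃',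
      ⟨_, _, _, hpY⟩, ?_⟩
    rwa [hE.isIso_f_iff_isZero_X₃ hpY, ← hE.isIso_f_iff_isZero_X₃ hcq]

end IsExactStructure

lemma eLength_eq_biSup (E : Set (ShortComplex C)) (X : C) :
    eLength E X = ⨆ m ∈ {m | HasChainOfLength E X m}, (m : ℕ∞) := by
  rw [eLength, ← sSup_image]
  congr 1
  ext
  simp [eq_comm]

theorem eLength_superadditive_general (E : Set (ShortComplex C)) (hE : IsExactStructure E)
    (S : ShortComplex C) (hS : S ∈ E) :
    eLength E S.X₁ + eLength E S.X₃ ≤ eLength E S.X₂ := by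
  simp only [eLength_eq_biSup]
  refine ENat.biSup_add_biSup_le (hE.exists_hasChainOfLength _) (hE.exists_hasChainOfLength _)
    fun m h₁ k h₃ => ?_
  exact_mod_cast le_biSup (fun n : ℕ => (n : ℕ∞)) (hE.hasChainOfLength_add hS h₁ h₃)

/-- Superadditivity of the `ℰ`-length: for a short exact sequence
`X ↣ Y ↠ Z` in `ℰ` with `X`, `Y`, `Z` of finite `ℰ`-length, one has
`l_ℰ(Y) ≥ l_ℰ(X) + l_ℰ(Z)`. -/
theorem eLength_superadditive (E : Set (ShortComplex C)) (hE : IsExactStructure E)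
    (S : ShortComplex C) (hS : S ∈ E)
    (h1 : eLength E S.X₁ ≠ ⊤) (h2 : eLength E S.X₂ ≠ ⊤) (h3 : eLength E S.X₃ ≠ ⊤) :
    eLength E S.X₁ + eLength E S.X₃ ≤ eLength E S.X₂ :=
  eLength_superadditive_general E hE S hS
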